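/- arXiv:1810.08086 — 6 statements merged into one kernel-verified Lean document; each statement's English description precedes it below -/
import Mathlib

section
/- Let M = {x ∈ ℝⁿ : Ax ≥ b} be a polyhedron and x* ∈ M, with S the index set of active constraints at x*. If x* minimizes cᵀx over M, then cᵀ is a conic combination of the rows of A indexed by S. -/
open Matrix Finset

-- conic Caratheodory
lemma cone_carath {E : Type*} [AddCommGroup E] [Module ℝ E] {m : ℕ} (v : Fin m → E)
    (A : Finset (Fin m)) :
    ∀ (w : Fin m → ℝ), (∀ i, 0 ≤ w i) → (∀ i ∉ A, w i = 0) →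
    ∃ T : Finset (Fin m), T ⊆ A ∧ LinearIndependent ℝ (fun i : T => v i) ∧
      ∃ u : Fin m → ℝ, (∀ i, 0 ≤ u i) ∧ (∀ i ∉ T, u i = 0) ∧
        ∑ i, u i • v i = ∑ i, w i • v i := by
  classical
  induction A using Finset.strongInduction with
  | _ A ih =>
    intro w hw hsupp
    by_cases hli : LinearIndependent ℝ (fun i : A => v i)
    · exact ⟨A, subset_rfl, hli, w, hw, hsupp, rfl⟩
    · obtain ⟨g, hg0, k, hk⟩ := Fintype.not_linearIndependent_iff.mp hli
      set s : ℝ := if 0 < g k then 1 else -1 with hs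
      set z : Fin m → ℝ := fun i => if h : i ∈ A then s * g ⟨i, h⟩ else 0 with hz
      have hzk : 0 < z k.1 := by
        have : z k.1 = s * g k := by simp [hz]
        rw [this, hs]
        rcases lt_trichotomy (g k) 0 with h | h | h
        · rw [if_neg (by linarith)]; nlinarith
        · exact absurd h hk
        · rw [if_pos h]; linarith
      have hzsum : ∑ i, z i • v i = 0 := by
        have h1 : ∑ i, z i • v i = ∑ i ∈ A, z i • v i := by
          refine (Finset.sum_subset (subset_univ A) ?_).symm
          intro i _ hi; simp [hz, dif_neg hi]
        have h2 : ∑ i ∈ A, z i • v i = s • ∑ i : A, g i • v i := by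
          rw [Finset.smul_sum, ← Finset.sum_coe_sort A (fun i => z i • v i)]
          refine Finset.sum_congr rfl fun i _ => ?_
          simp [hz, dif_pos i.2, mul_smul]
        rw [h1, h2, hg0, smul_zero]
      set P : Finset (Fin m) := A.filter (fun i => 0 < z i) with hP
      have hPne : P.Nonempty := ⟨k.1, by simp [hP, hzk, k.2]⟩
      set t : ℝ := P.inf' hPne (fun i => w i / z i) with ht
      have ht0 : 0 ≤ t := by
        apply Finset.le_inf'
        intro i hi
        have : 0 < z i := (Finset.mem_filter.mp hi).2
        exact div_nonneg (hw i) this.le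
      obtain ⟨i0, hi0P, hi0⟩ := Finset.exists_mem_eq_inf' hPne (fun i => w i / z i)
      have hzi0 : 0 < z i0 := (Finset.mem_filter.mp hi0P).2
      have hi0A : i0 ∈ A := (Finset.mem_filter.mp hi0P).1
      set w' : Fin m → ℝ := fun i => w i - t * z i with hw'def
      have hmul : ∀ i, t * z i ≤ w i := by
        intro i
        by_cases hiP : i ∈ P
        · have hzi : 0 < z i := (Finset.mem_filter.mp hiP).2
          have : t ≤ w i / z i := Finset.inf'_le _ hiP
          calc t * z i ≤ (w i / z i) * z i := by nlinarith
            _ = w i := div_mul_cancel₀ _ hzi.ne'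
        · have hzi : z i ≤ 0 := by
            by_cases hiA : i ∈ A
            · by_contra h
              exact hiP (Finset.mem_filter.mpr ⟨hiA, by linarith⟩)
            · simp [hz, dif_neg hiA]
          calc t * z i ≤ 0 := mul_nonpos_of_nonneg_of_nonpos ht0 hzi
            _ ≤ w i := hw i
      have hw'0 : ∀ i, 0 ≤ w' i := fun i => by
        simp only [hw'def]; linarith [hmul i]
      have hw'i0 : w' i0 = 0 := by
        have hti0 : t = w i0 / z i0 := hi0
        simp only [hw'def, hti0]
        rw [div_mul_cancel₀ _ hzi0.ne', sub_self]
      have hw'supp : ∀ i ∉ A.erase i0, w' i = 0 := by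
        intro i hi
        by_cases h : i = i0
        · subst h; exact hw'i0
        · have hA : i ∉ A := fun hA => hi (Finset.mem_erase.mpr ⟨h, hA⟩)
          simp [hw'def, hsupp i hA, hz, dif_neg hA]
      have hw'sum : ∑ i, w' i • v i = ∑ i, w i • v i := by
        have h5 : ∑ i, w' i • v i = ∑ i, w i • v i - t • ∑ i, z i • v i := by
          rw [Finset.smul_sum, ← Finset.sum_sub_distrib]
          refine Finset.sum_congr rfl fun i _ => ?_
          show (w i - t * z i) • v i = _
          rw [sub_smul, mul_smul]
        rw [h5, hzsum, smul_zero, sub_zero]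
      obtain ⟨T, hTsub, hTli, u, hu0, husupp, husum⟩ :=
        ih (A.erase i0) (A.erase_ssubset hi0A) w' hw'0 hw'supp
      exact ⟨T, hTsub.trans (Finset.erase_subset _ _), hTli, u, hu0, husupp,
        husum.trans hw'sum⟩

lemma cone_isClosed {n m : ℕ} (v : Fin m → EuclideanSpace ℝ (Fin n)) (S : Finset (Fin m)) :
    IsClosed {x : EuclideanSpace ℝ (Fin n) | ∃ w : Fin m → ℝ, (∀ i, 0 ≤ w i) ∧
      (∀ i ∉ S, w i = 0) ∧ x = ∑ i, w i • v i} := by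
  classical
  have hrw : {x : EuclideanSpace ℝ (Fin n) | ∃ w : Fin m → ℝ, (∀ i, 0 ≤ w i) ∧
      (∀ i ∉ S, w i = 0) ∧ x = ∑ i, w i • v i} =
      ⋃ T ∈ S.powerset, {x : EuclideanSpace ℝ (Fin n) |
        LinearIndependent ℝ (fun i : T => v i) ∧ ∃ u : Fin m → ℝ, (∀ i, 0 ≤ u i) ∧
        (∀ i ∉ T, u i = 0) ∧ x = ∑ i, u i • v i} := by
    ext x
    simp only [Set.mem_setOf_eq, Set.mem_iUnion, Finset.mem_powerset]
    constructor
    · rintro ⟨w, hw0, hwsupp, rfl⟩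
      obtain ⟨T, hTsub, hTli, u, hu0, husupp, husum⟩ := cone_carath v S w hw0 hwsupp
      exact ⟨T, hTsub, hTli, u, hu0, husupp, husum.symm⟩
    · rintro ⟨T, hTsub, _, u, hu0, husupp, rfl⟩
      exact ⟨u, hu0, fun i hi => husupp i (fun h => hi (hTsub h)), rfl⟩
  rw [hrw]
  refine Set.Finite.isClosed_biUnion S.powerset.finite_toSet fun T _ => ?_
  by_cases hli : LinearIndependent ℝ (fun i : T => v i)
  · let L : (↥T → ℝ) →ₗ[ℝ] EuclideanSpace ℝ (Fin n) :=
      { toFun := fun u => ∑ i : ↥T, u i • v i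
        map_add' := fun a b' => by simp [add_smul, Finset.sum_add_distrib]
        map_smul' := fun r a => by simp [smul_smul, Finset.smul_sum] }
    have hker : LinearMap.ker L = ⊥ := by
      rw [LinearMap.ker_eq_bot']
      intro u hu
      funext i
      exact Fintype.linearIndependent_iff.mp hli u hu i
    have himg : {x : EuclideanSpace ℝ (Fin n) |
        LinearIndependent ℝ (fun i : T => v i) ∧ ∃ u : Fin m → ℝ, (∀ i, 0 ≤ u i) ∧
        (∀ i ∉ T, u i = 0) ∧ x = ∑ i, u i • v i} =
        L '' {u : ↥T → ℝ | ∀ i, 0 ≤ u i} := by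
      ext x
      simp only [Set.mem_setOf_eq, Set.mem_image]
      constructor
      · rintro ⟨_, u, hu0, husupp, rfl⟩
        refine ⟨fun i => u i, fun i => hu0 i, ?_⟩
        show ∑ i : ↥T, u i • v i = ∑ i : Fin m, u i • v i
        rw [Finset.sum_coe_sort T (fun i => u i • v i)]
        exact Finset.sum_subset (subset_univ T) fun i _ hi => by
          rw [husupp i hi, zero_smul]
      · rintro ⟨u', hu', rfl⟩
        refine ⟨hli, fun i => if h : i ∈ T then u' ⟨i, h⟩ else 0, ?_, ?_, ?_⟩
        · intro i
          by_cases h : i ∈ T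
          · simpa [dif_pos h] using hu' ⟨i, h⟩
          · simp [dif_neg h]
        · intro i hi; simp [dif_neg hi]
        · show _ = ∑ i : Fin m, (if h : i ∈ T then u' ⟨i, h⟩ else 0) • v i
          rw [← Finset.sum_subset (subset_univ T) (fun i _ hi => by
            rw [dif_neg hi, zero_smul])]
          rw [← Finset.sum_coe_sort T
            (fun i => (if h : i ∈ T then u' ⟨i, h⟩ else 0) • v i)]
          refine Finset.sum_congr rfl fun i _ => ?_
          rw [dif_pos i.2]
    rw [himg]
    have hclemb := LinearMap.isClosedEmbedding_of_injective hker
    refine hclemb.isClosedMap _ ?_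
    have : {u : ↥T → ℝ | ∀ i, 0 ≤ u i} = ⋂ i, {u : ↥T → ℝ | 0 ≤ u i} := by
      ext u; simp [Set.mem_iInter]
    rw [this]
    exact isClosed_iInter fun i => isClosed_le continuous_const (continuous_apply i)
  · have : {x : EuclideanSpace ℝ (Fin n) |
        LinearIndependent ℝ (fun i : T => v i) ∧ ∃ u : Fin m → ℝ, (∀ i, 0 ≤ u i) ∧
        (∀ i ∉ T, u i = 0) ∧ x = ∑ i, u i • v i} = ∅ := by
      ext x; simp [hli]
    rw [this]; exact isClosed_empty

theorem stmt_1 {m n : ℕ} (A : Matrix (Fin m) (Fin n) ℝ) (b : Fin m → ℝ)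
    (xstar : Fin n → ℝ) (hxstar : ∀ i, b i ≤ A i ⬝ᵥ xstar)
    (c : Fin n → ℝ)
    (hopt : ∀ x : Fin n → ℝ, (∀ i, b i ≤ A i ⬝ᵥ x) → c ⬝ᵥ xstar ≤ c ⬝ᵥ x) :
    ∃ w : Fin m → ℝ, (∀ i, 0 ≤ w i) ∧ (∀ i, A i ⬝ᵥ xstar ≠ b i → w i = 0) ∧
      c = fun j => ∑ i, w i * A i j := by
  classical
  -- Step 1: key direction lemma
  have key : ∀ d : Fin n → ℝ, (∀ i, A i ⬝ᵥ xstar = b i → 0 ≤ A i ⬝ᵥ d) → 0 ≤ c ⬝ᵥ d := by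
    intro d hd
    by_contra hcd
    push_neg at hcd
    have hev : ∀ᶠ t in nhdsWithin (0:ℝ) (Set.Ioi 0),
        ∀ i, b i ≤ A i ⬝ᵥ (xstar + t • d) := by
      rw [Filter.eventually_all]
      intro i
      have hlin : ∀ t : ℝ, A i ⬝ᵥ (xstar + t • d) = A i ⬝ᵥ xstar + t * (A i ⬝ᵥ d) := by
        intro t
        rw [dotProduct_add, dotProduct_smul]
        simp [smul_eq_mul]
      by_cases hact : A i ⬝ᵥ xstar = b i
      · filter_upwards [self_mem_nhdsWithin] with t ht
        rw [hlin t, hact]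
        have h1 : (0:ℝ) < t := ht
        nlinarith [hd i hact]
      · have hib : b i < A i ⬝ᵥ xstar := lt_of_le_of_ne (hxstar i) (Ne.symm hact)
        have hcont : Filter.Tendsto (fun t : ℝ => A i ⬝ᵥ xstar + t * (A i ⬝ᵥ d))
            (nhdsWithin (0:ℝ) (Set.Ioi 0)) (nhds (A i ⬝ᵥ xstar)) := by
          have : Filter.Tendsto (fun t : ℝ => A i ⬝ᵥ xstar + t * (A i ⬝ᵥ d))
              (nhds (0:ℝ)) (nhds (A i ⬝ᵥ xstar + 0 * (A i ⬝ᵥ d))) := by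
            apply Filter.Tendsto.add tendsto_const_nhds
            exact (continuous_id.mul continuous_const).tendsto 0
          simpa using this.mono_left nhdsWithin_le_nhds
        filter_upwards [hcont.eventually (eventually_gt_nhds hib)] with t ht
        rw [hlin t]; linarith
    obtain ⟨t, hfeas, ht⟩ := (hev.and self_mem_nhdsWithin).exists
    have h1 := hopt _ hfeas
    have h2 : c ⬝ᵥ (xstar + t • d) = c ⬝ᵥ xstar + t * (c ⬝ᵥ d) := by
      rw [dotProduct_add, dotProduct_smul]; simp [smul_eq_mul]
    have h3 : (0:ℝ) < t := ht
    rw [h2] at h1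
    nlinarith
  -- Step 2: Farkas via cone separation
  let v : Fin m → EuclideanSpace ℝ (Fin n) := fun i => WithLp.toLp 2 (fun j => A i j)
  let S : Finset (Fin m) := Finset.univ.filter (fun i => A i ⬝ᵥ xstar = b i)
  let C : ConvexCone ℝ (EuclideanSpace ℝ (Fin n)) :=
    { carrier := {x | ∃ w : Fin m → ℝ, (∀ i, 0 ≤ w i) ∧ (∀ i ∉ S, w i = 0) ∧
        x = ∑ i, w i • v i}
      smul_mem' := by
        rintro r hr x ⟨w, hw0, hwsupp, rfl⟩
        refine ⟨fun i => r * w i, fun i => mul_nonneg hr.le (hw0 i),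
          fun i hi => by show r * w i = 0; rw [hwsupp i hi, mul_zero], ?_⟩
        rw [Finset.smul_sum]
        refine Finset.sum_congr rfl fun i _ => ?_
        show r • w i • v i = (r * w i) • v i
        rw [smul_smul]
      add_mem' := by
        rintro x ⟨w, hw0, hwsupp, rfl⟩ y ⟨w', hw'0, hw'supp, rfl⟩
        refine ⟨fun i => w i + w' i, fun i => add_nonneg (hw0 i) (hw'0 i),
          fun i hi => by show w i + w' i = 0; rw [hwsupp i hi, hw'supp i hi, add_zero], ?_⟩
        rw [← Finset.sum_add_distrib]
        refine Finset.sum_congr rfl fun i _ => ?_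
        show w i • v i + w' i • v i = (w i + w' i) • v i
        rw [add_smul] }
  have hCne : (C : Set (EuclideanSpace ℝ (Fin n))).Nonempty :=
    ⟨0, ⟨0, fun i => le_refl 0, fun i _ => rfl, by simp⟩⟩
  have hCcl : IsClosed (C : Set (EuclideanSpace ℝ (Fin n))) := cone_isClosed v S
  let cE : EuclideanSpace ℝ (Fin n) := WithLp.toLp 2 (fun j => c j)
  have hcC : cE ∈ C := by
    by_contra hc
    obtain ⟨y, hy1, hy2⟩ :=
      ProperCone.hyperplane_separation' (E := EuclideanSpace ℝ (Fin n))
        ⟨C.toPointedCone ⟨0, fun i => le_refl 0, fun i _ => rfl, by simp⟩, hCcl⟩ hc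
    have hdkey : ∀ i, A i ⬝ᵥ xstar = b i → 0 ≤ A i ⬝ᵥ (fun j => y j) := by
      intro i hact
      have hvi : v i ∈ C := by
        refine ⟨fun k => if k = i then 1 else 0, fun k => by positivity,
          fun k hk => if_neg (fun h => hk (by simp [S, h, hact])), ?_⟩
        simp [ite_smul]
      have := hy1 (v i) hvi
      rw [PiLp.inner_apply] at this
      simpa [v, dotProduct, RCLike.inner_apply, mul_comm] using this
    have hfin := key (fun j => y j) hdkey
    rw [PiLp.inner_apply] at hy2
    have : (0:ℝ) ≤ ∑ j, y j * c j := by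
      simpa [dotProduct, mul_comm] using hfin
    simp only [RCLike.inner_apply, conj_trivial] at hy2
    exact absurd hy2 (not_lt.mpr (by simpa [cE] using this))
  obtain ⟨w, hw0, hwsupp, hsum⟩ := hcC
  refine ⟨w, hw0, fun i hi => hwsupp i (by simp [S, hi]), ?_⟩
  funext j
  have := congrArg (fun x : EuclideanSpace ℝ (Fin n) => EuclideanSpace.proj j x) hsum
  simp only [map_sum, PiLp.proj_apply] at this
  rw [show cE j = c j from rfl] at this
  rw [this]
  refine Finset.sum_congr rfl fun i _ => ?_
  show EuclideanSpace.proj j (w i • v i) = w i * A i j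
  rw [_root_.map_smul]
  simp [v, smul_eq_mul]
end

section
/- Let K be a polyhedral cone in ℝⁿ with nonempty topological interior. Then K possesses a unique insphere, and the center of this insphere is a unit vector. -/
open RealInnerProductSpace

section Aux

variable {n m : ℕ} [NeZero m] (k : Fin m → EuclideanSpace ℝ (Fin n))

private noncomputable def F9 (x : EuclideanSpace ℝ (Fin n)) : ℝ :=
  Finset.univ.inf' Finset.univ_nonempty (fun i => ⟪k i, x⟫)

private lemma F9_eq (x : EuclideanSpace ℝ (Fin n)) : F9 k x = ⨅ i, ⟪k i, x⟫ :=
  Finset.inf'_univ_eq_ciInf _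

private lemma F9_le (x : EuclideanSpace ℝ (Fin n)) (i : Fin m) : F9 k x ≤ ⟪k i, x⟫ :=
  Finset.inf'_le _ (Finset.mem_univ i)

private lemma le_F9 {x : EuclideanSpace ℝ (Fin n)} {c : ℝ} (h : ∀ i, c ≤ ⟪k i, x⟫) :
    c ≤ F9 k x :=
  Finset.le_inf' _ _ (fun i _ => h i)

private lemma lt_F9 {x : EuclideanSpace ℝ (Fin n)} {c : ℝ} (h : ∀ i, c < ⟪k i, x⟫) :
    c < F9 k x :=
  (Finset.lt_inf'_iff _).2 (fun i _ => h i)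

private lemma F9_smul {c : ℝ} (hc : 0 ≤ c) (x : EuclideanSpace ℝ (Fin n)) :
    F9 k (c • x) = c * F9 k x := by
  rw [F9_eq, F9_eq]
  simp_rw [real_inner_smul_right]
  rw [Real.mul_iInf_of_nonneg hc]

private lemma F9_zero : F9 k 0 = 0 := by
  have := F9_smul k (le_refl (0:ℝ)) 0
  simpa using this

private lemma F9_cont : Continuous (F9 k) := by
  apply continuous_iff_continuousAt.2
  intro x
  exact ContinuousAt.finset_inf'_apply _ fun i _ =>
    (Continuous.inner continuous_const continuous_id).continuousAt

end Aux

theorem stmt_9 {n m : ℕ} [NeZero m] (k : Fin m → EuclideanSpace ℝ (Fin n))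
    (hk : ∀ i, ‖k i‖ = 1)
    (hint : (interior {x : EuclideanSpace ℝ (Fin n) | ∀ i, 0 ≤ ⟪k i, x⟫}).Nonempty) :
    (∃! x : EuclideanSpace ℝ (Fin n), ‖x‖ ≤ 1 ∧
        ∀ y : EuclideanSpace ℝ (Fin n), ‖y‖ ≤ 1 → (⨅ i, ⟪k i, y⟫) ≤ ⨅ i, ⟪k i, x⟫) ∧
    ∀ x : EuclideanSpace ℝ (Fin n),
      (‖x‖ ≤ 1 ∧ ∀ y : EuclideanSpace ℝ (Fin n), ‖y‖ ≤ 1 → (⨅ i, ⟪k i, y⟫) ≤ ⨅ i, ⟪k i, x⟫) →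
      ‖x‖ = 1 := by
  simp only [← F9_eq]
  -- get a strictly interior point
  obtain ⟨x₀, hx₀⟩ := hint
  obtain ⟨ε, hε, hball⟩ := Metric.mem_nhds_iff.1 (mem_interior_iff_mem_nhds.1 hx₀)
  have hpos : ∀ i, 0 < ⟪k i, x₀⟫ := by
    intro i
    have hmem : x₀ - (ε/2) • k i ∈ Metric.ball x₀ ε := by
      rw [Metric.mem_ball, dist_eq_norm]
      have : ‖x₀ - (x₀ - (ε/2) • k i)‖ = ε/2 := by
        rw [show x₀ - (x₀ - (ε/2) • k i) = (ε/2) • k i by abel, norm_smul, hk i]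
        simp [abs_of_pos hε, abs_of_pos (half_pos hε)]
      rw [← norm_neg]
      simp only [neg_sub]
      rw [this]; linarith
    have h0 : 0 ≤ ⟪k i, x₀ - (ε/2) • k i⟫ := hball hmem i
    rw [inner_sub_right, real_inner_smul_right, real_inner_self_eq_norm_sq, hk i] at h0
    simp only [one_pow, mul_one] at h0
    linarith
  have hx₀ne : x₀ ≠ 0 := by
    intro h
    have := hpos ⟨0, Nat.pos_of_ne_zero (NeZero.ne m)⟩
    rw [h, inner_zero_right] at this
    exact lt_irrefl _ this
  set u : EuclideanSpace ℝ (Fin n) := ‖x₀‖⁻¹ • x₀ with hu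
  have hnu : ‖u‖ = 1 := by
    rw [hu, norm_smul, norm_inv, norm_norm, inv_mul_cancel₀ (norm_ne_zero_iff.2 hx₀ne)]
  have hFu : 0 < F9 k u := by
    apply lt_F9
    intro i
    rw [hu, real_inner_smul_right]
    exact mul_pos (inv_pos.2 (norm_pos_iff.2 hx₀ne)) (hpos i)
  -- any optimal point has norm 1
  have hnorm1 : ∀ x : EuclideanSpace ℝ (Fin n),
      (‖x‖ ≤ 1 ∧ ∀ y : EuclideanSpace ℝ (Fin n), ‖y‖ ≤ 1 → F9 k y ≤ F9 k x) → ‖x‖ = 1 := by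
    rintro x ⟨hx1, hopt⟩
    have hFx : 0 < F9 k x := lt_of_lt_of_le hFu (hopt u (le_of_eq hnu))
    have hxne : x ≠ 0 := by
      intro h; rw [h, F9_zero] at hFx; exact lt_irrefl _ hFx
    by_contra hne
    have hlt : ‖x‖ < 1 := lt_of_le_of_ne hx1 hne
    have hxpos : 0 < ‖x‖ := norm_pos_iff.2 hxne
    set c := ‖x‖⁻¹ with hc
    have hc1 : 1 < c := (one_lt_inv₀ hxpos).2 hlt
    have hcx : ‖c • x‖ = 1 := by
      rw [norm_smul, hc, norm_inv, norm_norm, inv_mul_cancel₀ (ne_of_gt hxpos)]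
    have := hopt (c • x) (le_of_eq hcx)
    rw [F9_smul k (le_of_lt (lt_trans one_pos hc1))] at this
    nlinarith
  constructor
  · -- existence + uniqueness
    have hcomp : IsCompact (Metric.closedBall (0 : EuclideanSpace ℝ (Fin n)) 1) :=
      isCompact_closedBall _ _
    obtain ⟨x, hxmem, hxmax⟩ := hcomp.exists_isMaxOn (⟨0, by simp⟩)
      ((F9_cont k).continuousOn)
    have hxP : ‖x‖ ≤ 1 ∧ ∀ y : EuclideanSpace ℝ (Fin n), ‖y‖ ≤ 1 → F9 k y ≤ F9 k x := by
      refine ⟨mem_closedBall_zero_iff.1 hxmem, fun y hy => hxmax (mem_closedBall_zero_iff.2 hy)⟩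
    refine ⟨x, hxP, ?_⟩
    rintro y ⟨hy1, hyopt⟩
    by_contra hxy
    have hFxy : F9 k x = F9 k y :=
      le_antisymm (hyopt x hxP.1) (hxP.2 y hy1)
    -- midpoint
    set z : EuclideanSpace ℝ (Fin n) := (1/2 : ℝ) • x + (1/2 : ℝ) • y with hz
    have hzint : z ∈ interior (Metric.closedBall (0 : EuclideanSpace ℝ (Fin n)) 1) :=
      strictConvex_closedBall ℝ (0 : EuclideanSpace ℝ (Fin n)) 1 hxmem
        (mem_closedBall_zero_iff.2 hy1) (fun h => hxy h.symm) (by norm_num) (by norm_num)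
        (by norm_num)
    rw [interior_closedBall _ one_ne_zero] at hzint
    have hzlt : ‖z‖ < 1 := mem_ball_zero_iff.1 hzint
    have hFz : F9 k x ≤ F9 k z := by
      apply le_F9
      intro i
      rw [hz, inner_add_right, real_inner_smul_right, real_inner_smul_right]
      have h1 : F9 k x ≤ ⟪k i, x⟫ := F9_le k x i
      have h2 : F9 k x ≤ ⟪k i, y⟫ := hFxy ▸ F9_le k y i
      linarith
    have hzP : ‖z‖ ≤ 1 ∧ ∀ w : EuclideanSpace ℝ (Fin n), ‖w‖ ≤ 1 → F9 k w ≤ F9 k z :=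
      ⟨le_of_lt hzlt, fun w hw => le_trans (hxP.2 w hw) hFz⟩
    exact absurd (hnorm1 z hzP) (ne_of_lt hzlt)
  · exact hnorm1
end

section
/- Consider the iterative insphere algorithm: Problem P₀ maximizes z subject to kᵢᵀx ≥ z (all i) and −1 ≤ xⱼ ≤ 1 (all j); Problem P_{ℓ+1} adds the constraint u_ℓᵀx ≤ 1 where u_ℓ = x_ℓ/‖x_ℓ‖ and (x_ℓ, z_ℓ) is optimal for P_ℓ. If K = {x : kᵢᵀx ≥ 0} has nonempty interior and unit-norm rows kᵢ, then the sequence x_ℓ − u_ℓ converges to the zero vector. -/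
open RealInnerProductSpace

private lemma coord_le_norm {n : ℕ} (y : EuclideanSpace ℝ (Fin n)) (j : Fin n) :
    |y j| ≤ ‖y‖ := by
  rw [EuclideanSpace.norm_eq]
  have h1 : |y j| = Real.sqrt (‖y j‖ ^ 2) := by
    rw [Real.sqrt_sq_eq_abs, abs_norm, Real.norm_eq_abs]
  rw [h1]
  apply Real.sqrt_le_sqrt
  exact Finset.single_le_sum (f := fun i => ‖y i‖ ^ 2)
    (fun i _ => sq_nonneg _) (Finset.mem_univ j)

private lemma norm_le_sqrt {n : ℕ} (y : EuclideanSpace ℝ (Fin n))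
    (h : ∀ j, |y j| ≤ 1) : ‖y‖ ≤ Real.sqrt n := by
  rw [EuclideanSpace.norm_eq]
  apply Real.sqrt_le_sqrt
  calc (∑ i, ‖y i‖ ^ 2) ≤ ∑ _i : Fin n, (1 : ℝ) := by
        apply Finset.sum_le_sum
        intro i _
        have := h i
        rw [Real.norm_eq_abs]
        nlinarith [abs_nonneg (y i)]
    _ = n := by simp

theorem stmt_10 {n m : ℕ} [NeZero m] (k : Fin m → EuclideanSpace ℝ (Fin n))
    (hk : ∀ i, ‖k i‖ = 1)
    (hint : (interior {x : EuclideanSpace ℝ (Fin n) | ∀ i, 0 ≤ ⟪k i, x⟫}).Nonempty)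
    (x : ℕ → EuclideanSpace ℝ (Fin n)) (z : ℕ → ℝ)
    (u : ℕ → EuclideanSpace ℝ (Fin n)) (hu : ∀ ℓ, u ℓ = ‖x ℓ‖⁻¹ • x ℓ)
    (feas : ℕ → EuclideanSpace ℝ (Fin n) → ℝ → Prop)
    (hfeas : ∀ ℓ y w, feas ℓ y w ↔
      ((∀ i, w ≤ ⟪k i, y⟫) ∧ (∀ j : Fin n, |y j| ≤ 1) ∧ ∀ t < ℓ, ⟪u t, y⟫ ≤ 1))
    (hxfeas : ∀ ℓ, feas ℓ (x ℓ) (z ℓ))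
    (hopt : ∀ ℓ y w, feas ℓ y w → w ≤ z ℓ) :
    Filter.Tendsto (fun ℓ => x ℓ - u ℓ) Filter.atTop (nhds 0) := by
  -- an interior point with strict inequalities
  obtain ⟨x₀, hx₀⟩ := hint
  have hx₀' : {x : EuclideanSpace ℝ (Fin n) | ∀ i, 0 ≤ ⟪k i, x⟫} ∈ nhds x₀ :=
    mem_interior_iff_mem_nhds.mp hx₀
  obtain ⟨ε, hε, hball⟩ := Metric.mem_nhds_iff.mp hx₀'
  have hstrict : ∀ i, ε / 2 ≤ ⟪k i, x₀⟫ := by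
    intro i
    have hmem : x₀ - (ε / 2) • k i ∈ Metric.ball x₀ ε := by
      rw [Metric.mem_ball, dist_eq_norm]
      have : x₀ - (x₀ - (ε / 2) • k i) = (ε / 2) • k i := by abel
      rw [show x₀ - (ε / 2) • k i - x₀ = -((ε / 2) • k i) by abel]
      rw [norm_neg, norm_smul, hk i, Real.norm_eq_abs, abs_of_pos (by linarith)]
      linarith
    have := hball hmem i
    rw [inner_sub_right, real_inner_smul_right, real_inner_self_eq_norm_sq, hk i] at this
    simp only [one_pow, mul_one] at this
    linarith
  -- u has norm at most 1
  have hunorm : ∀ ℓ, ‖u ℓ‖ ≤ 1 := by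
    intro ℓ
    rw [hu ℓ, norm_smul, Real.norm_eq_abs, abs_inv, abs_norm]
    rcases eq_or_ne (x ℓ) 0 with h | h
    · simp [h]
    · rw [inv_mul_cancel₀ (norm_ne_zero_iff.mpr h)]
  -- every optimal point has norm at least 1
  have hnorm : ∀ ℓ, 1 ≤ ‖x ℓ‖ := by
    intro ℓ
    by_contra hlt
    push_neg at hlt
    set t : ℝ := (1 - ‖x ℓ‖) / (‖x₀‖ + 1) with ht
    have hx₀pos : (0:ℝ) < ‖x₀‖ + 1 := by positivity
    have htpos : 0 < t := div_pos (by linarith) hx₀pos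
    set y : EuclideanSpace ℝ (Fin n) := x ℓ + t • x₀ with hy
    have hynorm : ‖y‖ ≤ 1 := by
      calc ‖y‖ ≤ ‖x ℓ‖ + ‖t • x₀‖ := norm_add_le _ _
        _ = ‖x ℓ‖ + t * ‖x₀‖ := by
            rw [norm_smul, Real.norm_eq_abs, abs_of_pos htpos]
        _ ≤ ‖x ℓ‖ + (1 - ‖x ℓ‖) := by
            have : t * ‖x₀‖ ≤ t * (‖x₀‖ + 1) := by nlinarith [norm_nonneg x₀]
            have h2 : t * (‖x₀‖ + 1) = 1 - ‖x ℓ‖ := by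
              rw [ht, div_mul_cancel₀ _ hx₀pos.ne']
            linarith
        _ = 1 := by ring
    obtain ⟨hkx, _, _⟩ := (hfeas ℓ (x ℓ) (z ℓ)).mp (hxfeas ℓ)
    have hyfeas : feas ℓ y (z ℓ + t * (ε / 2)) := by
      rw [hfeas]
      refine ⟨fun i => ?_, fun j => ?_, fun s _ => ?_⟩
      · rw [hy, inner_add_right, real_inner_smul_right]
        have h1 := hkx i
        have h2 := hstrict i
        nlinarith
      · exact le_trans (coord_le_norm y j) hynorm
      · calc ⟪u s, y⟫ ≤ ‖u s‖ * ‖y‖ := real_inner_le_norm _ _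
          _ ≤ 1 * 1 := by
              apply mul_le_mul (hunorm s) hynorm (norm_nonneg _) zero_le_one
          _ = 1 := by ring
    have := hopt ℓ y (z ℓ + t * (ε / 2)) hyfeas
    nlinarith
  -- cross inequality: for t < ℓ, ‖x t - x ℓ‖ ≥ ‖x t‖ - 1
  have hcross : ∀ s ℓ, s < ℓ → ‖x s‖ - 1 ≤ ‖x s - x ℓ‖ := by
    intro s ℓ hsl
    have hxspos : (0:ℝ) < ‖x s‖ := lt_of_lt_of_le one_pos (hnorm s)
    obtain ⟨_, _, hcut⟩ := (hfeas ℓ (x ℓ) (z ℓ)).mp (hxfeas ℓ)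
    have h1 : ⟪u s, x ℓ⟫ ≤ 1 := hcut s hsl
    rw [hu s, real_inner_smul_left] at h1
    have h2 : ⟪x s, x ℓ⟫ ≤ ‖x s‖ := by
      have := mul_le_mul_of_nonneg_left h1 (le_of_lt hxspos)
      rw [mul_one] at this
      calc ⟪x s, x ℓ⟫ = ‖x s‖ * (‖x s‖⁻¹ * ⟪x s, x ℓ⟫) := by
            field_simp
        _ ≤ ‖x s‖ := this
    have hsq : (‖x s‖ - 1) ^ 2 ≤ ‖x s - x ℓ‖ ^ 2 := by
      rw [norm_sub_sq_real]
      nlinarith [hnorm ℓ, hnorm s]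
    have h3 : 0 ≤ ‖x s‖ - 1 := by linarith [hnorm s]
    nlinarith [norm_nonneg (x s - x ℓ)]
  -- the norms tend to 1
  have hmain : Filter.Tendsto (fun ℓ => ‖x ℓ‖ - 1) Filter.atTop (nhds 0) := by
    by_contra hc
    rw [Metric.tendsto_atTop] at hc
    push_neg at hc
    obtain ⟨δ, hδ, hfreq⟩ := hc
    have hfreq' : ∃ᶠ ℓ in Filter.atTop, δ ≤ ‖x ℓ‖ - 1 := by
      rw [Filter.frequently_atTop]
      intro N
      obtain ⟨ℓ, hℓN, hℓ⟩ := hfreq N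
      refine ⟨ℓ, hℓN, ?_⟩
      rw [Real.dist_eq] at hℓ
      have h3 : 0 ≤ ‖x ℓ‖ - 1 := by linarith [hnorm ℓ]
      rw [abs_of_nonneg (by linarith : (0:ℝ) ≤ ‖x ℓ‖ - 1 - 0)] at hℓ
      linarith
    obtain ⟨φ, hφ, hφδ⟩ := Filter.extraction_of_frequently_atTop hfreq'
    -- the sequence x ∘ φ is bounded, extract convergent subsequence
    have hbdd : ∀ p, (x ∘ φ) p ∈ Metric.closedBall (0 : EuclideanSpace ℝ (Fin n)) (Real.sqrt n) := by
      intro p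
      rw [Metric.mem_closedBall, dist_zero_right]
      obtain ⟨_, hcube, _⟩ := (hfeas (φ p) (x (φ p)) (z (φ p))).mp (hxfeas (φ p))
      exact norm_le_sqrt _ hcube
    obtain ⟨a, _, ψ, hψ, hconv⟩ :=
      tendsto_subseq_of_bounded Metric.isBounded_closedBall hbdd
    have hcauchy : CauchySeq ((x ∘ φ) ∘ ψ) := hconv.cauchySeq
    rw [Metric.cauchySeq_iff] at hcauchy
    obtain ⟨N, hN⟩ := hcauchy δ hδ
    have hlt : dist ((x ∘ φ) (ψ N)) ((x ∘ φ) (ψ (N + 1))) < δ :=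
      hN N le_rfl (N + 1) (by omega)
    have hmono : φ (ψ N) < φ (ψ (N + 1)) := hφ (hψ (by omega))
    have := hcross (φ (ψ N)) (φ (ψ (N + 1))) hmono
    rw [dist_eq_norm] at hlt
    have := hφδ (ψ N)
    simp only [Function.comp] at hlt
    linarith [hcross (φ (ψ N)) (φ (ψ (N + 1))) hmono]
  -- conclude: ‖x ℓ - u ℓ‖ = ‖x ℓ‖ - 1
  rw [tendsto_zero_iff_norm_tendsto_zero]
  have heq : ∀ ℓ, ‖x ℓ - u ℓ‖ = ‖x ℓ‖ - 1 := by
    intro ℓ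
    have hxpos : (0:ℝ) < ‖x ℓ‖ := lt_of_lt_of_le one_pos (hnorm ℓ)
    have h1 : x ℓ - u ℓ = (1 - ‖x ℓ‖⁻¹) • x ℓ := by
      rw [hu ℓ, sub_smul, one_smul]
    rw [h1, norm_smul, Real.norm_eq_abs]
    have h2 : ‖x ℓ‖⁻¹ ≤ 1 := by
      rw [inv_le_one_iff₀]
      right
      exact hnorm ℓ
    rw [abs_of_nonneg (by linarith)]
    field_simp
  simp_rw [heq]
  exact hmain
end

section
/- Let C be a binary linear code with fundamental polytope P(H) for a parity-check matrix H. For any x ∈ P(H) and any codeword c ∈ C, the relative point x^c defined by (x^c)ᵢ = |xᵢ − cᵢ| is also an element of P(H). -/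
/-- The fundamental polytope of a binary parity-check matrix `H`. -/
def fundPolytope {m n : ℕ} (H : Matrix (Fin m) (Fin n) (ZMod 2)) : Set (Fin n → ℝ) :=
  {x | (∀ i, 0 ≤ x i ∧ x i ≤ 1) ∧
    ∀ (j : Fin m) (S : Finset (Fin n)),
      S ⊆ Finset.univ.filter (fun i => H j i = 1) → Odd S.card →
      ((∑ i ∈ S, x i) +
          ∑ i ∈ (Finset.univ.filter (fun i => H j i = 1)) \ S, (1 - x i))
        ≤ ((Finset.univ.filter (fun i => H j i = 1)).card : ℝ) - 1}

/-- The relative point `x^c`, with `(x^c)ᵢ = |xᵢ - cᵢ|`. -/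
def relPt {n : ℕ} (c : Fin n → ZMod 2) (x : Fin n → ℝ) : Fin n → ℝ :=
  fun i => |x i - ((c i).val : ℝ)|

theorem stmt_12 {m n : ℕ} (H : Matrix (Fin m) (Fin n) (ZMod 2))
    (c : Fin n → ZMod 2) (hc : H.mulVec c = 0)
    (x : Fin n → ℝ) (hx : x ∈ fundPolytope H) :
    relPt c x ∈ fundPolytope H := by
  obtain ⟨hx01, hxchk⟩ := hx
  have h01 : ∀ a : ZMod 2, a = 0 ∨ a = 1 := by decide
  have hrel : ∀ i, relPt c x i = if c i = 1 then 1 - x i else x i := by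
    intro i
    rcases h01 (c i) with h | h
    · have hv : ((c i).val : ℝ) = 0 := by rw [h]; norm_num
      have hne : c i ≠ 1 := by rw [h]; decide
      simp only [relPt, hv, sub_zero, if_neg hne]
      exact abs_of_nonneg (hx01 i).1
    · have hv : ((c i).val : ℝ) = 1 := by rw [h, ZMod.val_one]; norm_num
      simp only [relPt, hv, if_pos h]
      rw [abs_sub_comm]
      exact abs_of_nonneg (by linarith [(hx01 i).2])
  constructor
  · intro i
    rw [hrel i]
    split <;> constructor <;> linarith [(hx01 i).1, (hx01 i).2]
  · intro j S hS hodd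
    set N := Finset.univ.filter (fun i => H j i = (1 : ZMod 2)) with hN
    set T := N.filter (fun i => c i = 1) with hT
    set S' := (S \ T) ∪ (T \ S) with hS'
    have hTN : T ⊆ N := Finset.filter_subset _ _
    have hS'N : S' ⊆ N :=
      Finset.union_subset ((Finset.sdiff_subset).trans hS) ((Finset.sdiff_subset).trans hTN)
    -- parity of T
    have hTeven : Even T.card := by
      have h0 := congrFun hc j
      have heq : ∀ i, H j i * c i = if i ∈ T then (1 : ZMod 2) else 0 := by
        intro i
        rcases h01 (H j i) with hHi | hHi <;> rcases h01 (c i) with hci | hci <;>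
          simp [hT, hN, Finset.mem_filter, hHi, hci]
      have : (T.card : ZMod 2) = 0 := by
        have := h0
        rw [Matrix.mulVec, dotProduct] at this
        rw [Finset.sum_congr rfl (fun i _ => heq i)] at this
        simpa using this
      have h2 : (2 : ℕ) ∣ T.card := by
        rwa [ZMod.natCast_eq_zero_iff] at this
      exact even_iff_two_dvd.mpr h2
    have hodd' : Odd S'.card := by
      have hdisj : Disjoint (S \ T) (T \ S) := disjoint_sdiff_sdiff
      have hcard : S'.card = (S \ T).card + (T \ S).card :=
        Finset.card_union_of_disjoint hdisj
      have h1 : (S \ T).card + (S ∩ T).card = S.card := Finset.card_sdiff_add_card_inter S T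
      have h2 : (T \ S).card + (T ∩ S).card = T.card := Finset.card_sdiff_add_card_inter T S
      have h3 : (S ∩ T).card = (T ∩ S).card := by rw [Finset.inter_comm]
      rw [Nat.odd_iff] at hodd ⊢
      rw [Nat.even_iff] at hTeven
      omega
    have key : ∀ (g : Fin n → ℝ) (A : Finset (Fin n)), A ⊆ N →
        (∑ i ∈ A, g i) + ∑ i ∈ N \ A, (1 - g i)
          = ∑ i ∈ N, (if i ∈ A then g i else 1 - g i) := by
      intro g A hA
      rw [← Finset.sum_sdiff hA, add_comm]
      congr 1
      · exact Finset.sum_congr rfl fun i hi => by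
          rw [if_neg (Finset.mem_sdiff.mp hi).2]
      · exact Finset.sum_congr rfl fun i hi => by rw [if_pos hi]
    have hsum : (∑ i ∈ S, relPt c x i) + ∑ i ∈ N \ S, (1 - relPt c x i)
        = (∑ i ∈ S', x i) + ∑ i ∈ N \ S', (1 - x i) := by
      rw [key _ S hS, key x S' hS'N]
      refine Finset.sum_congr rfl fun i hi => ?_
      have hiT : i ∈ T ↔ c i = 1 := by simp [hT, Finset.mem_filter, hi]
      have hiS' : i ∈ S' ↔ ((i ∈ S ∧ i ∉ T) ∨ (i ∈ T ∧ i ∉ S)) := by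
        simp [hS', Finset.mem_union, Finset.mem_sdiff]
      rw [hrel i]
      by_cases hci : c i = 1 <;> by_cases hiS : i ∈ S <;>
        simp [hci, hiS, hiS', hiT]
    rw [hsum]
    exact hxchk j S' hS'N hodd'
end

section
/- Let P(H) be the fundamental polytope, let (j, S) denote the constraint −Σ_{i∈S} xᵢ + Σ_{i'∈N(h_j)∖S} x_{i'} ≥ 1 − |S| for a row h_j and odd-cardinality subset S ⊆ N(h_j), and for a codeword c ∈ C let S^c = S △ (supp(c) ∩ N(h_j)). If x ∈ P(H), c ∈ C, and the constraint (j, S) is active at x, then the constraint (j, S^c) is active at the relative point x^c. -/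
theorem stmt_15 {m n : ℕ} (H : Matrix (Fin m) (Fin n) (ZMod 2))
    (c : Fin n → ZMod 2) (hc : H.mulVec c = 0)
    (x : Fin n → ℝ) (hx : x ∈ fundPolytope H)
    (j : Fin m) (S : Finset (Fin n))
    (N : Finset (Fin n)) (hN : N = Finset.univ.filter (fun i => H j i = 1))
    (hS : S ⊆ N) (hodd : Odd S.card)
    -- the constraint `(j, S)` is active at `x`
    (hactive : (∑ i ∈ S, x i) + ∑ i ∈ N \ S, (1 - x i) = (N.card : ℝ) - 1)
    (Sc : Finset (Fin n))
    (hSc : Sc = (S \ (Finset.univ.filter (fun i => c i = 1) ∩ N)) ∪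
                ((Finset.univ.filter (fun i => c i = 1) ∩ N) \ S)) :
    (∑ i ∈ Sc, relPt c x i) + ∑ i ∈ N \ Sc, (1 - relPt c x i) = (N.card : ℝ) - 1 := by
  have h01 : ∀ a : ZMod 2, a = 0 ∨ a = 1 := by decide
  have hx01 := hx.1
  have hScN : Sc ⊆ N := by
    subst hSc
    intro i hi
    simp only [Finset.mem_union, Finset.mem_sdiff, Finset.mem_inter] at hi
    rcases hi with ⟨h1, _⟩ | ⟨⟨_, h2⟩, _⟩
    · exact hS h1
    · exact h2
  have hsplit : ∀ (T : Finset (Fin n)), T ⊆ N → ∀ (f : Fin n → ℝ),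
      (∑ i ∈ T, f i) + ∑ i ∈ N \ T, (1 - f i)
        = ∑ i ∈ N, (if i ∈ T then f i else 1 - f i) := by
    intro T hT f
    rw [← Finset.union_sdiff_of_subset hT, Finset.sum_union (Finset.disjoint_sdiff)]
    congr 1
    · exact Finset.sum_congr rfl (fun i hi => by simp [hi])
    · refine Finset.sum_congr ?_ (fun i hi => ?_)
      · rw [Finset.union_sdiff_of_subset hT]
      · rw [Finset.mem_sdiff] at hi
        simp [hi.2]
  have key : ∀ i ∈ N, (if i ∈ Sc then relPt c x i else 1 - relPt c x i)
      = (if i ∈ S then x i else 1 - x i) := by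
    intro i hiN
    have hmem : i ∈ Sc ↔ ((i ∈ S ∧ c i ≠ 1) ∨ (c i = 1 ∧ i ∉ S)) := by
      subst hSc
      simp only [Finset.mem_union, Finset.mem_sdiff, Finset.mem_inter,
        Finset.mem_filter, Finset.mem_univ, true_and]
      tauto
    rcases h01 (c i) with h | h
    · have hne : c i ≠ 1 := by rw [h]; decide
      have hr : relPt c x i = x i := by
        simp [relPt, h, abs_of_nonneg (hx01 i).1]
      have hm : i ∈ Sc ↔ i ∈ S := by rw [hmem]; tauto
      by_cases hs : i ∈ S
      · simp [hr, hm.mpr hs, hs]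
      · simp [hr, fun h' => hs (hm.mp h'), hs, hm, hs]
    · have hv : (((c i).val : ℕ) : ℝ) = 1 := by rw [h, ZMod.val_one]; norm_num
      have hr : relPt c x i = 1 - x i := by
        simp only [relPt, hv]
        rw [abs_of_nonpos (by linarith [(hx01 i).2])]
        ring
      by_cases hs : i ∈ S
      · have : i ∉ Sc := by rw [hmem]; tauto
        simp [hr, this, hs]
      · have : i ∈ Sc := by rw [hmem]; tauto
        simp [hr, this, hs]
  rw [hsplit Sc hScN, Finset.sum_congr rfl key, ← hsplit S hS, hactive]
end

section
/- Let C be a binary linear code presented by H, let c ∈ C, and define φ_c : ℝⁿ → ℝⁿ by (φ_c(x))ᵢ = (−1)^{cᵢ} xᵢ. Then φ_c is a linear isometry of ℝⁿ mapping the recovery cone K_ω bijectively onto the recovery cone K_{ω^c}, for any extreme point ω of the fundamental polytope P(H). -/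
open Matrix

/-- The constraints `(a, β)` (meaning `aᵀx ≥ β`) describing the fundamental polytope
`P(H)` of a binary parity-check matrix `H`. -/
def fundConstraints {m n : ℕ} (H : Matrix (Fin m) (Fin n) (ZMod 2)) :
    Set ((Fin n → ℝ) × ℝ) :=
  {p | (∃ i : Fin n, p = (Pi.single i 1, 0)) ∨
       (∃ i : Fin n, p = (-Pi.single i 1, -1)) ∨
       (∃ (j : Fin m) (S : Finset (Fin n)),
          S ⊆ Finset.univ.filter (fun i => H j i = 1) ∧ Odd S.card ∧
          p = (fun i => if i ∈ S then (-1 : ℝ)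
                        else if H j i = 1 then 1 else 0,
               1 - (S.card : ℝ)))}

/-- The recovery cone `K_ω`: all conic combinations of the constraint vectors of
`P(H)` whose constraints are active (binding) at `ω`. -/
def recoveryCone {m n : ℕ} (H : Matrix (Fin m) (Fin n) (ZMod 2)) (ω : Fin n → ℝ) :
    Set (Fin n → ℝ) :=
  {x | ∃ (N : ℕ) (w : Fin N → ℝ) (a : Fin N → (Fin n → ℝ)) (β : Fin N → ℝ),
        (∀ t, 0 ≤ w t) ∧
        (∀ t, (a t, β t) ∈ fundConstraints H ∧ a t ⬝ᵥ ω = β t) ∧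
        x = ∑ t, w t • a t}

/-- The sign-flip map `φ_c`, with `(φ_c(x))ᵢ = (-1)^{cᵢ} xᵢ`. -/
def phiMap {n : ℕ} (c : Fin n → ZMod 2) (x : Fin n → ℝ) : Fin n → ℝ :=
  fun i => (if c i = 1 then (-1 : ℝ) else 1) * x i


set_option linter.unreachableTactic false
set_option linter.unnecessarySeqFocus false
set_option linter.unusedTactic false

lemma zmod2_cases (a : ZMod 2) : a = 0 ∨ a = 1 := by revert a; decide

lemma relPt_eq {n : ℕ} (c : Fin n → ZMod 2) (x : Fin n → ℝ)
    (hx : ∀ i, 0 ≤ x i ∧ x i ≤ 1) (i : Fin n) :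
    relPt c x i = if c i = 1 then 1 - x i else x i := by
  rcases zmod2_cases (c i) with h | h
  · have hv : (c i).val = 0 := by rw [h]; rfl
    rw [relPt, if_neg (by rw [h]; decide), hv]
    rw [Nat.cast_zero, sub_zero]
    exact abs_of_nonneg (hx i).1
  · have hv : (c i).val = 1 := by rw [h]; rfl
    rw [relPt, if_pos h, hv, Nat.cast_one, abs_sub_comm]
    exact abs_of_nonneg (by linarith [(hx i).2])

lemma relPt_bounds {n : ℕ} (c : Fin n → ZMod 2) (x : Fin n → ℝ)
    (hx : ∀ i, 0 ≤ x i ∧ x i ≤ 1) (i : Fin n) :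
    0 ≤ relPt c x i ∧ relPt c x i ≤ 1 := by
  rw [relPt_eq c x hx i]
  rcases hx i with ⟨h1, h2⟩
  split <;> constructor <;> linarith

lemma relPt_invol {n : ℕ} (c : Fin n → ZMod 2) (x : Fin n → ℝ)
    (hx : ∀ i, 0 ≤ x i ∧ x i ≤ 1) : relPt c (relPt c x) = x := by
  funext i
  rw [relPt_eq c _ (relPt_bounds c x hx), relPt_eq c x hx]
  split <;> ring

lemma phiMap_invol {n : ℕ} (c : Fin n → ZMod 2) (x : Fin n → ℝ) :
    phiMap c (phiMap c x) = x := by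
  funext i; by_cases h : c i = 1 <;> simp [phiMap, h]

lemma transport {m n : ℕ} (H : Matrix (Fin m) (Fin n) (ZMod 2))
    (c : Fin n → ZMod 2) (hc : H.mulVec c = 0) (x : Fin n → ℝ)
    (hx : ∀ i, 0 ≤ x i ∧ x i ≤ 1) (a : Fin n → ℝ) (β : ℝ)
    (hmem : (a, β) ∈ fundConstraints H) (hact : a ⬝ᵥ x = β) :
    ∃ β', (phiMap c a, β') ∈ fundConstraints H ∧ phiMap c a ⬝ᵥ relPt c x = β' := by
  have hrel := relPt_eq c x hx
  rcases hmem with ⟨i, hp⟩ | ⟨i, hp⟩ | ⟨j, S, hS, hodd, hp⟩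
  · -- a = single i 1, β = 0
    rw [Prod.mk.injEq] at hp
    obtain ⟨ha, hβ⟩ := hp
    subst ha hβ
    rw [single_dotProduct, one_mul] at hact
    by_cases hci : c i = 1
    · have hphi : phiMap c (Pi.single i 1) = -Pi.single i 1 := by
        funext k
        by_cases hk : k = i <;> simp [phiMap, Pi.single_apply, hk, hci]
      refine ⟨-1, Or.inr (Or.inl ⟨i, by rw [hphi]⟩), ?_⟩
      rw [hphi, neg_dotProduct, single_dotProduct, one_mul, hrel i, if_pos hci, hact]
      norm_num
    · have hphi : phiMap c (Pi.single i 1) = Pi.single i 1 := by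
        funext k
        by_cases hk : k = i <;> simp [phiMap, Pi.single_apply, hk, hci]
      refine ⟨0, Or.inl ⟨i, by rw [hphi]⟩, ?_⟩
      rw [hphi, single_dotProduct, one_mul, hrel i, if_neg hci, hact]
  · -- a = -single i 1, β = -1
    rw [Prod.mk.injEq] at hp
    obtain ⟨ha, hβ⟩ := hp
    subst ha hβ
    rw [neg_dotProduct, single_dotProduct, one_mul] at hact
    have hxi : x i = 1 := by linarith
    by_cases hci : c i = 1
    · have hphi : phiMap c (-Pi.single i 1) = Pi.single i 1 := by
        funext k
        by_cases hk : k = i <;> simp [phiMap, Pi.single_apply, hk, hci]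
      refine ⟨0, Or.inl ⟨i, by rw [hphi]⟩, ?_⟩
      rw [hphi, single_dotProduct, one_mul, hrel i, if_pos hci, hxi]
      norm_num
    · have hphi : phiMap c (-Pi.single i 1) = -Pi.single i 1 := by
        funext k
        by_cases hk : k = i <;> simp [phiMap, Pi.single_apply, hk, hci]
      refine ⟨-1, Or.inr (Or.inl ⟨i, by rw [hphi]⟩), ?_⟩
      rw [hphi, neg_dotProduct, single_dotProduct, one_mul, hrel i, if_neg hci, hxi]
  · -- parity constraint
    rw [Prod.mk.injEq] at hp
    obtain ⟨ha, hβ⟩ := hp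
    subst ha hβ
    classical
    set F : Finset (Fin n) := Finset.univ.filter (fun i => H j i = 1) with hF
    set T : Finset (Fin n) := Finset.univ.filter (fun i => c i = 1) with hT
    set S' : Finset (Fin n) := F.filter (fun i => Xor' (i ∈ S) (c i = 1)) with hS'
    have hSF : ∀ i, i ∈ S → H j i = 1 := by
      intro i hi
      have := hS hi
      simpa [hF] using this
    have hS'F : S' ⊆ F := Finset.filter_subset _ _
    -- evenness of (F ∩ T).card
    have hFT : Even (F ∩ T).card := by
      have hrow : ∑ i, H j i * c i = 0 := by
        have := congrFun hc j
        simpa [Matrix.mulVec, dotProduct] using this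
      have hterm : ∀ i : Fin n, H j i * c i = if i ∈ F ∩ T then 1 else 0 := by
        intro i
        rcases zmod2_cases (H j i) with h1 | h1 <;> rcases zmod2_cases (c i) with h2 | h2 <;>
          simp [hF, hT, Finset.mem_inter, Finset.mem_filter, h1, h2]
      rw [Finset.sum_congr rfl (fun i _ => hterm i), Finset.sum_ite_mem,
        Finset.univ_inter, Finset.sum_const, nsmul_eq_mul, mul_one] at hrow
      rw [ZMod.natCast_eq_zero_iff] at hrow
      rcases hrow with ⟨r, hr⟩; exact ⟨r, by omega⟩
    -- cardinality identity
    have hS'union : S' = (S.filter (fun i => ¬ c i = 1)) ∪ ((F ∩ T).filter (fun i => i ∉ S)) := by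
      ext i
      have hiF : i ∈ S → i ∈ F := fun h => hS h
      simp only [hS', hT, Finset.mem_filter, Finset.mem_union, Finset.mem_inter,
        Finset.mem_univ, true_and, Xor', xor_def]
      tauto
    have hdisj : Disjoint (S.filter (fun i => ¬ c i = 1)) ((F ∩ T).filter (fun i => i ∉ S)) := by
      rw [Finset.disjoint_left]
      intro i hi1 hi2
      exact (Finset.mem_filter.1 hi2).2 (Finset.mem_filter.1 hi1).1
    have hScard : S.card = (S.filter (fun i => c i = 1)).card + (S.filter (fun i => ¬ c i = 1)).card :=
      (Finset.card_filter_add_card_filter_not (fun i => c i = 1)).symm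
    have hFTcard : (F ∩ T).card = ((F ∩ T).filter (fun i => i ∈ S)).card + ((F ∩ T).filter (fun i => i ∉ S)).card :=
      (Finset.card_filter_add_card_filter_not (fun i => i ∈ S)).symm
    have hmatch : (F ∩ T).filter (fun i => i ∈ S) = S.filter (fun i => c i = 1) := by
      ext i
      have hiF : i ∈ S → i ∈ F := fun h => hS h
      simp only [hT, Finset.mem_filter, Finset.mem_inter, Finset.mem_univ, true_and]
      tauto
    have hS'card : S'.card = (S.filter (fun i => ¬ c i = 1)).card + ((F ∩ T).filter (fun i => i ∉ S)).card := by
      rw [hS'union, Finset.card_union_of_disjoint hdisj]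
    have hoddS' : Odd S'.card := by
      rcases hodd with ⟨k, hk⟩
      rcases hFT with ⟨l, hl⟩
      rw [hmatch] at hFTcard
      rw [Nat.odd_iff]
      omega
    -- the transported vector
    have hphi : phiMap c (fun i => if i ∈ S then (-1:ℝ) else if H j i = 1 then 1 else 0)
        = fun i => if i ∈ S' then (-1:ℝ) else if H j i = 1 then 1 else 0 := by
      funext i
      by_cases hiS : i ∈ S
      · have hiF : H j i = 1 := hSF i hiS
        by_cases hci : c i = 1 <;>
          simp [phiMap, hS', hF, Finset.mem_filter, Xor', hiS, hiF, hci]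
      · by_cases hiF : H j i = 1
        · by_cases hci : c i = 1 <;>
            simp [phiMap, hS', hF, Finset.mem_filter, Xor', hiS, hiF, hci]
        · have hiS' : i ∉ S' := fun h => hiF (by simpa [hF] using hS'F h)
          simp [phiMap, hiS, hiF, hiS']
    refine ⟨1 - (S'.card : ℝ), Or.inr (Or.inr ⟨j, S', by rwa [← hF], hoddS', by rw [hphi]⟩), ?_⟩
    -- activity
    have hkey : ∀ i, phiMap c (fun i => if i ∈ S then (-1:ℝ) else if H j i = 1 then 1 else 0) i * relPt c x i
        + (if i ∈ S' then (1:ℝ) else 0)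
        = (if i ∈ S then (-1:ℝ) else if H j i = 1 then 1 else 0) * x i + (if i ∈ S then 1 else 0) := by
      intro i
      rw [hphi, hrel i]
      by_cases hiS : i ∈ S
      · have hiF : H j i = 1 := hSF i hiS
        by_cases hci : c i = 1 <;>
          simp only [hS', hF, Finset.mem_filter, Finset.mem_univ, true_and, Xor', hiS, hiF, hci] <;>
          norm_num <;> ring
      · by_cases hiF : H j i = 1
        · by_cases hci : c i = 1 <;>
            simp only [hS', hF, Finset.mem_filter, Finset.mem_univ, true_and, Xor', hiS, hiF, hci] <;>
            norm_num <;> ring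
        · have hiS' : i ∉ S' := fun h => hiF (by simpa [hF] using hS'F h)
          simp [hiS, hiF, hiS']
    have hsum := Finset.sum_congr rfl (fun i (_ : i ∈ (Finset.univ : Finset (Fin n))) => hkey i)
    rw [Finset.sum_add_distrib, Finset.sum_add_distrib] at hsum
    have hcS : ∑ i : Fin n, (if i ∈ S then (1:ℝ) else 0) = S.card := by
      rw [Finset.sum_ite_mem, Finset.univ_inter, Finset.sum_const, nsmul_eq_mul, mul_one]
    have hcS' : ∑ i : Fin n, (if i ∈ S' then (1:ℝ) else 0) = S'.card := by
      rw [Finset.sum_ite_mem, Finset.univ_inter, Finset.sum_const, nsmul_eq_mul, mul_one]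
    rw [hcS, hcS'] at hsum
    have hdot : (fun i => if i ∈ S then (-1:ℝ) else if H j i = 1 then 1 else 0) ⬝ᵥ x = 1 - (S.card : ℝ) := hact
    rw [dotProduct] at hdot ⊢
    linarith


lemma coneMapsTo {m n : ℕ} (H : Matrix (Fin m) (Fin n) (ZMod 2))
    (c : Fin n → ZMod 2) (hc : H.mulVec c = 0) (x : Fin n → ℝ)
    (hx : ∀ i, 0 ≤ x i ∧ x i ≤ 1) :
    Set.MapsTo (phiMap c) (recoveryCone H x) (recoveryCone H (relPt c x)) := by
  rintro y ⟨N, w, a, β, hw, hcons, rfl⟩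
  choose β' hmem' hact' using fun t => transport H c hc x hx (a t) (β t) (hcons t).1 (hcons t).2
  refine ⟨N, w, fun t => phiMap c (a t), β', hw, fun t => ⟨hmem' t, hact' t⟩, ?_⟩
  funext i
  simp only [phiMap, Finset.sum_apply, Pi.smul_apply, smul_eq_mul, Finset.mul_sum]
  exact Finset.sum_congr rfl fun t _ => by ring

theorem stmt_16 {m n : ℕ} (H : Matrix (Fin m) (Fin n) (ZMod 2))
    (c : Fin n → ZMod 2) (hc : H.mulVec c = 0)
    (ω : Fin n → ℝ) (hω : ω ∈ Set.extremePoints ℝ (fundPolytope H)) :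
    -- `φ_c` is linear
    IsLinearMap ℝ (phiMap c) ∧
    -- `φ_c` preserves the Euclidean norm
    (∀ x : Fin n → ℝ, (∑ i, (phiMap c x i) ^ 2) = ∑ i, (x i) ^ 2) ∧
    -- `φ_c` maps `K_ω` bijectively onto `K_{ω^c}`
    Set.BijOn (phiMap c) (recoveryCone H ω) (recoveryCone H (relPt c ω)) := by
  have hxω : ∀ i, 0 ≤ ω i ∧ ω i ≤ 1 := hω.1.1
  have hxωc : ∀ i, 0 ≤ relPt c ω i ∧ relPt c ω i ≤ 1 := relPt_bounds c ω hxω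
  refine ⟨⟨fun x y => ?_, fun r x => ?_⟩, fun x => ?_, coneMapsTo H c hc ω hxω, ?_, ?_⟩
  · funext i; simp only [phiMap, Pi.add_apply]; ring
  · funext i; simp only [phiMap, Pi.smul_apply, smul_eq_mul]; ring
  · exact Finset.sum_congr rfl fun i _ => by
      by_cases h : c i = 1 <;> simp [phiMap, h] <;> ring
  · exact fun x _ y _ h => by rw [← phiMap_invol c x, h, phiMap_invol]
  · intro y hy
    refine ⟨phiMap c y, ?_, phiMap_invol c y⟩
    have := coneMapsTo H c hc (relPt c ω) hxωc hy
    rwa [relPt_invol c ω hxω] at this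
end
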